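/- arXiv:1910.12110 — 3 statements merged into one kernel-verified Lean document; each statement's English description precedes it below -/
import Mathlib

section
/- If G is a 2-self-centered graph containing a triangle on vertices u, v, w, then at most one of u, v, w has degree 2 in G. -/
open SimpleGraph

variable {V : Type*}

/-- Eccentricity of a vertex: maximum distance to any vertex. -/
noncomputable def ecc (G : SimpleGraph V) [Fintype V] (v : V) : ℕ :=
  Finset.univ.sup fun u => G.dist v u

/-- Diameter: maximum eccentricity. -/
noncomputable def gdiam (G : SimpleGraph V) [Fintype V] : ℕ :=
  Finset.univ.sup fun v => ecc G v

/-- Radius: minimum eccentricity. -/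
noncomputable def grad (G : SimpleGraph V) [Fintype V] : ℕ :=
  sInf (Set.range fun v => ecc G v)

/-- A graph is 2-self-centered if it is connected and diam = rad = 2. -/
def TwoSC (G : SimpleGraph V) [Fintype V] : Prop :=
  G.Connected ∧ gdiam G = 2 ∧ grad G = 2

/-!
If two vertices `u`, `v` of a triangle `uvw` have degree 2, their neighbourhoods are `{v, w}` and
`{u, w}`. Since every vertex `x` lies within distance 2 of `u`, a vertex `x ∉ {u, v, w}` has a
common neighbour with `u`; it lies in `{v, w}` and cannot be `v`, so it is `w`. Hence `w` is
adjacent to every other vertex, i.e. `ecc w ≤ 1`, contradicting `rad G = 2`.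
-/

namespace SimpleGraph

variable {G : SimpleGraph V}

lemma Reachable.commonNeighbors_nonempty_of_dist_le_two {u x : V} (hr : G.Reachable u x)
    (hdist : G.dist u x ≤ 2) (hne : u ≠ x) (hnadj : ¬ G.Adj u x) :
    (G.commonNeighbors u x).Nonempty := by
  by_contra hempty
  have hlt : 2 < G.edist u x :=
    two_lt_edist_iff.mpr ⟨hne, hnadj, Set.not_nonempty_iff_eq_empty.mp hempty⟩
  rw [← hr.coe_dist_eq_edist] at hlt
  exact absurd hdist (not_le.mpr (by exact_mod_cast hlt))

lemma neighborFinset_eq_pair_of_degree_eq_two [Fintype V] [DecidableEq V] [DecidableRel G.Adj]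
    {u v w : V} (huv : G.Adj u v) (huw : G.Adj u w) (hvw : v ≠ w) (hu : G.degree u = 2) :
    G.neighborFinset u = {v, w} := by
  refine (Finset.eq_of_subset_of_card_le ?_ ?_).symm
  · simp [Finset.insert_subset_iff, huv, huw]
  · rw [Finset.card_pair hvw, card_neighborFinset_eq_degree, hu]

end SimpleGraph

section Eccentricity

variable [Fintype V] (G : SimpleGraph V)

lemma dist_le_ecc (v x : V) : G.dist v x ≤ ecc G v :=
  Finset.le_sup (Finset.mem_univ x)

lemma ecc_le_gdiam (v : V) : ecc G v ≤ gdiam G :=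
  Finset.le_sup (Finset.mem_univ v)

lemma grad_le_ecc (v : V) : grad G ≤ ecc G v :=
  Nat.sInf_le ⟨v, rfl⟩

lemma ecc_le_one_of_forall_adj {w : V} (hw : ∀ x, x ≠ w → G.Adj w x) : ecc G w ≤ 1 := by
  refine Finset.sup_le fun x _ => ?_
  by_cases hx : x = w
  · simp [hx]
  · exact (dist_eq_one_iff_adj.mpr (hw x hx)).le

end Eccentricity

lemma adj_of_triangle_of_degree_eq_two [Fintype V] {G : SimpleGraph V} [DecidableRel G.Adj]
    (hconn : G.Connected) (hdiam : gdiam G ≤ 2) {u v w : V}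
    (huv : G.Adj u v) (hvw : G.Adj v w) (huw : G.Adj u w)
    (hu : G.degree u = 2) (hv : G.degree v = 2) (x : V) (hxw : x ≠ w) : G.Adj w x := by
  classical
  have hNu := neighborFinset_eq_pair_of_degree_eq_two huv huw hvw.ne hu
  have hNv := neighborFinset_eq_pair_of_degree_eq_two huv.symm hvw huw.ne hv
  by_contra hwx
  have hxu : x ≠ u := by rintro rfl; exact hwx huw.symm
  have hxv : x ≠ v := by rintro rfl; exact hwx hvw.symm
  have hux : ¬ G.Adj u x := by
    intro h
    have : x ∈ G.neighborFinset u := (mem_neighborFinset G u x).mpr h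
    simp [hNu, hxv, hxw] at this
  have hdist : G.dist u x ≤ 2 := (dist_le_ecc G u x).trans ((ecc_le_gdiam G u).trans hdiam)
  obtain ⟨a, hua, hxa⟩ :=
    (hconn u x).commonNeighbors_nonempty_of_dist_le_two hdist (Ne.symm hxu) hux
  have ha : a ∈ G.neighborFinset u := (mem_neighborFinset G u a).mpr hua
  rw [hNu, Finset.mem_insert, Finset.mem_singleton] at ha
  rcases ha with rfl | rfl
  · have : x ∈ G.neighborFinset a := (mem_neighborFinset G a x).mpr hxa.symm
    simp [hNv, hxu, hxw] at this
  · exact hwx hxa.symm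

lemma TwoSC.not_degree_eq_two_of_triangle [Fintype V] {G : SimpleGraph V} [DecidableRel G.Adj]
    (h2sc : TwoSC G) {u v w : V} (huv : G.Adj u v) (hvw : G.Adj v w) (huw : G.Adj u w) :
    ¬ (G.degree u = 2 ∧ G.degree v = 2) := by
  rintro ⟨hu, hv⟩
  obtain ⟨hconn, hdiam, hrad⟩ := h2sc
  have hecc := ecc_le_one_of_forall_adj G
    (adj_of_triangle_of_degree_eq_two hconn hdiam.le huv hvw huw hu hv)
  have := grad_le_ecc G w
  omega

/-- In a 2-self-centered graph, at most one vertex of any triangle has degree 2. -/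
theorem stmt_10 [Fintype V] (G : SimpleGraph V) [DecidableRel G.Adj]
    (h2sc : TwoSC G) (u v w : V)
    (huv : G.Adj u v) (hvw : G.Adj v w) (huw : G.Adj u w) :
    ¬ (G.degree u = 2 ∧ G.degree v = 2) ∧
    ¬ (G.degree u = 2 ∧ G.degree w = 2) ∧
    ¬ (G.degree v = 2 ∧ G.degree w = 2) :=
  ⟨h2sc.not_degree_eq_two_of_triangle huv hvw huw,
    h2sc.not_degree_eq_two_of_triangle huw hvw.symm huv,
    h2sc.not_degree_eq_two_of_triangle hvw huw.symm huv.symm⟩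
end

section
/- If G is a 2-self-centered graph that is not edge-minimal (some edge e can be removed keeping the graph 2-self-centered), then G contains a triangle. -/
/-!
If `G - ab` still has diameter `2`, then `a` and `b`, which are no longer adjacent there, have a
common neighbour `c` in `G - ab`; the edge `ab` closes the triangle `abc` in `G`.
-/

open SimpleGraph

variable {V : Type*}

theorem dist_le_gdiam [Fintype V] (G : SimpleGraph V) (u v : V) : G.dist u v ≤ gdiam G :=
  (Finset.le_sup (f := fun w => G.dist u w) (Finset.mem_univ v)).trans
    (Finset.le_sup (f := ecc G) (Finset.mem_univ u))

namespace SimpleGraph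

variable {G : SimpleGraph V} {a b c : V}

theorem Reachable.commonNeighbors_nonempty_of_dist_le_two_s12 (h : G.Reachable a b) (hne : a ≠ b)
    (hnadj : ¬ G.Adj a b) (hd : G.dist a b ≤ 2) : (G.commonNeighbors a b).Nonempty := by
  have hd0 : G.dist a b ≠ 0 := dist_ne_zero_iff_ne_and_reachable.mpr ⟨hne, h⟩
  have hd1 : G.dist a b ≠ 1 := fun h1 => hnadj (dist_eq_one_iff_adj.mp h1)
  have hedist : G.edist a b = 2 := by
    rw [← h.coe_dist_eq_edist, show G.dist a b = 2 by omega]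
    rfl
  exact (edist_eq_two_iff.mp hedist).2.2

theorem Adj.not_cliqueFree_three_of_mem_commonNeighbors (hab : G.Adj a b)
    (hc : c ∈ G.commonNeighbors a b) : ¬ G.CliqueFree 3 := by
  classical
  rw [mem_commonNeighbors] at hc
  exact fun hcf => hcf {a, b, c} (is3Clique_triple_iff.mpr ⟨hab, hc.1, hc.2⟩)

theorem Adj.not_cliqueFree_three_of_dist_deleteEdges_le_two (hab : G.Adj a b)
    (hreach : (G.deleteEdges {s(a, b)}).Reachable a b)
    (hd : (G.deleteEdges {s(a, b)}).dist a b ≤ 2) : ¬ G.CliqueFree 3 := by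
  have hnadj : ¬ (G.deleteEdges {s(a, b)}).Adj a b := by simp
  obtain ⟨c, hac, hbc⟩ := hreach.commonNeighbors_nonempty_of_dist_le_two_s12 hab.ne hnadj hd
  exact hab.not_cliqueFree_three_of_mem_commonNeighbors
    ⟨G.deleteEdges_le _ hac, G.deleteEdges_le _ hbc⟩

end SimpleGraph

theorem stmt_12_general [Fintype V] (G : SimpleGraph V)
    (hnotmin : ∃ e ∈ G.edgeSet, TwoSC (G.deleteEdges {e})) :
    ¬ G.CliqueFree 3 := by
  obtain ⟨e, he, hconn, hdiam, -⟩ := hnotmin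
  induction e using Sym2.ind with
  | h a b =>
    have hab : G.Adj a b := he
    exact hab.not_cliqueFree_three_of_dist_deleteEdges_le_two (hconn.preconnected a b)
      (hdiam ▸ dist_le_gdiam _ a b)

/-- A 2-self-centered graph that is not edge-minimal contains a triangle. -/
theorem stmt_12 [Fintype V] (G : SimpleGraph V)
    (h2sc : TwoSC G)
    (hnotmin : ∃ e ∈ G.edgeSet, TwoSC (G.deleteEdges {e})) :
    ¬ G.CliqueFree 3 :=
  stmt_12_general G hnotmin
end

section
/- If G is a 2-self-centered graph with a triangle u, v, w such that deg(u) ≥ 3, deg(v) ≥ 3, and neither u is a critical vertex for any pair nor v is a critical vertex for any pair, then G − uv is also 2-self-centered. -/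
open SimpleGraph

variable {V : Type*}

/-!
A graph is 2-self-centered exactly when every vertex has a non-neighbour and any two distinct
non-adjacent vertices have a common neighbour. Deleting `uv` keeps every non-neighbour. A pair
that loses its common neighbour is either `{u, v}` itself, which still has `w`, or a pair `{v, b}`
whose common neighbour was `u` (or symmetrically); since `u` is not critical, that pair has a
common neighbour `y ≠ u`, and `y ≠ v` because `y` is adjacent to `v`.
-/

namespace SimpleGraph

variable {G : SimpleGraph V} {a b : V}

lemma Reachable.two_le_dist_iff (h : G.Reachable a b) :
    2 ≤ G.dist a b ↔ a ≠ b ∧ ¬G.Adj a b := by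
  refine ⟨fun h2 => ⟨?_, fun hadj => ?_⟩, fun hab => h.one_lt_dist_of_ne_of_not_adj hab.1 hab.2⟩
  · rintro rfl
    simp at h2
  · rw [dist_eq_one_iff_adj.mpr hadj] at h2
    omega

lemma Reachable.dist_le_two_iff (h : G.Reachable a b) :
    G.dist a b ≤ 2 ↔ (a ≠ b → ¬G.Adj a b → (G.commonNeighbors a b).Nonempty) := by
  rw [← Nat.cast_le (α := ℕ∞), h.coe_dist_eq_edist, ← not_lt, Nat.cast_ofNat, two_lt_edist_iff]
  simp [Set.nonempty_iff_ne_empty]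

lemma connected_of_commonNeighbors_nonempty [Nonempty V]
    (h : ∀ a b, a ≠ b → ¬G.Adj a b → (G.commonNeighbors a b).Nonempty) : G.Connected := by
  refine (connected_iff G).2 ⟨fun a b => ?_, inferInstance⟩
  by_cases hab : a = b
  · exact hab ▸ Reachable.refl a
  by_cases hadj : G.Adj a b
  · exact hadj.reachable
  obtain ⟨c, hac, hbc⟩ := h a b hab hadj
  exact hac.reachable.trans hbc.symm.reachable

end SimpleGraph

section TwoSelfCentered

variable {G : SimpleGraph V} [Fintype V]

lemma ecc_eq_two_iff (hG : G.Connected) (a : V) :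
    ecc G a = 2 ↔ (∃ b, a ≠ b ∧ ¬G.Adj a b) ∧
      ∀ b, a ≠ b → ¬G.Adj a b → (G.commonNeighbors a b).Nonempty := by
  rw [le_antisymm_iff, ecc, Finset.sup_le_iff, Finset.le_sup_iff (by norm_num), and_comm]
  simp only [Finset.mem_univ, true_implies, true_and]
  exact and_congr (exists_congr fun b => (hG a b).two_le_dist_iff)
    (forall_congr' fun b => (hG a b).dist_le_two_iff)

lemma twoSC_iff_forall_ecc_eq_two [Nonempty V] : TwoSC G ↔ G.Connected ∧ ∀ a, ecc G a = 2 := by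
  constructor
  · rintro ⟨hG, hdiam, hrad⟩
    refine ⟨hG, fun a => le_antisymm ?_ ?_⟩
    · exact hdiam ▸ Finset.le_sup (f := ecc G) (Finset.mem_univ a)
    · exact hrad ▸ Nat.sInf_le ⟨a, rfl⟩
  · rintro ⟨hG, hecc⟩
    have hconst : ecc G = fun _ => 2 := funext hecc
    exact ⟨hG, by simp [gdiam, hconst, Finset.sup_const Finset.univ_nonempty], by simp [grad, hconst]⟩

theorem twoSC_iff [Nonempty V] :
    TwoSC G ↔ (∀ a, ∃ b, a ≠ b ∧ ¬G.Adj a b) ∧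
      ∀ a b, a ≠ b → ¬G.Adj a b → (G.commonNeighbors a b).Nonempty := by
  rw [twoSC_iff_forall_ecc_eq_two]
  constructor
  · rintro ⟨hG, hecc⟩
    exact ⟨fun a => ((ecc_eq_two_iff hG a).1 (hecc a)).1,
      fun a => ((ecc_eq_two_iff hG a).1 (hecc a)).2⟩
  · rintro ⟨hfar, hcommon⟩
    have hG := connected_of_commonNeighbors_nonempty hcommon
    exact ⟨hG, fun a => (ecc_eq_two_iff hG a).2 ⟨hfar a, hcommon a⟩⟩

end TwoSelfCentered

namespace SimpleGraph

variable {G : SimpleGraph V} {a b u v w : V}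

def IsNoncritical (G : SimpleGraph V) (x : V) : Prop :=
  ∀ a b, a ≠ b → ¬G.Adj a b → G.Adj a x → G.Adj x b → ∃ y, y ≠ x ∧ G.Adj a y ∧ G.Adj y b

lemma deleteEdges_adj_of_ne_of_ne (h : G.Adj a b) (hu : b ≠ u) (hv : b ≠ v) :
    (G.deleteEdges {s(u, v)}).Adj a b := by
  simp [h, hu, hv]

lemma deleteEdges_adj_left_of_ne (h : G.Adj a u) (hv : a ≠ v) :
    (G.deleteEdges {s(u, v)}).Adj a u := by
  simp [h, hv, h.ne]

lemma IsNoncritical.commonNeighbors_deleteEdges_nonempty (hu : G.IsNoncritical u) (hab : a ≠ b)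
    (hnadj : ¬G.Adj a b) (hau : G.Adj a u) (hbu : G.Adj b u) :
    ((G.deleteEdges {s(u, v)}).commonNeighbors a b).Nonempty := by
  by_cases hv : a = v ∨ b = v
  · obtain ⟨y, hyu, hay, hyb⟩ := hu a b hab hnadj hau hbu.symm
    have hyv : y ≠ v := by
      rintro rfl
      rcases hv with rfl | rfl
      exacts [G.irrefl hay, G.irrefl hyb]
    exact ⟨y, deleteEdges_adj_of_ne_of_ne hay hyu hyv, deleteEdges_adj_of_ne_of_ne hyb.symm hyu hyv⟩
  · rw [not_or] at hv
    exact ⟨u, deleteEdges_adj_left_of_ne hau hv.1, deleteEdges_adj_left_of_ne hbu hv.2⟩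

lemma commonNeighbors_deleteEdges_nonempty (hu : G.IsNoncritical u) (hv : G.IsNoncritical v)
    (huw : G.Adj u w) (hvw : G.Adj v w)
    (hcommon : ∀ a b, a ≠ b → ¬G.Adj a b → (G.commonNeighbors a b).Nonempty)
    (hab : a ≠ b) (hnadj : ¬(G.deleteEdges {s(u, v)}).Adj a b) :
    ((G.deleteEdges {s(u, v)}).commonNeighbors a b).Nonempty := by
  by_cases hG : G.Adj a b
  · have hwu : w ≠ u := huw.ne.symm
    have hwv : w ≠ v := hvw.ne.symm
    have huv : s(a, b) = s(u, v) := by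
      by_contra hne
      exact hnadj ((deleteEdges_adj ..).2 ⟨hG, hne⟩)
    rcases Sym2.eq_iff.1 huv with ⟨rfl, rfl⟩ | ⟨rfl, rfl⟩
    · exact ⟨w, deleteEdges_adj_of_ne_of_ne huw hwu hwv, deleteEdges_adj_of_ne_of_ne hvw hwu hwv⟩
    · exact ⟨w, deleteEdges_adj_of_ne_of_ne hvw hwu hwv, deleteEdges_adj_of_ne_of_ne huw hwu hwv⟩
  obtain ⟨c, hac, hbc⟩ := hcommon a b hab hG
  by_cases hcu : c = u
  · subst hcu
    exact hu.commonNeighbors_deleteEdges_nonempty hab hG hac hbc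
  by_cases hcv : c = v
  · subst hcv
    rw [Sym2.eq_swap]
    exact hv.commonNeighbors_deleteEdges_nonempty hab hG hac hbc
  exact ⟨c, deleteEdges_adj_of_ne_of_ne hac hcu hcv, deleteEdges_adj_of_ne_of_ne hbc hcu hcv⟩

end SimpleGraph

theorem stmt_15_general [Fintype V] (G : SimpleGraph V)
    (h2sc : TwoSC G) (u v w : V)
    (hvw : G.Adj v w) (huw : G.Adj u w)
    (hucrit : ∀ a b : V, a ≠ b → ¬ G.Adj a b → G.Adj a u → G.Adj u b →
      ∃ x : V, x ≠ u ∧ G.Adj a x ∧ G.Adj x b)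
    (hvcrit : ∀ a b : V, a ≠ b → ¬ G.Adj a b → G.Adj a v → G.Adj v b →
      ∃ x : V, x ≠ v ∧ G.Adj a x ∧ G.Adj x b) :
    TwoSC (G.deleteEdges {s(u, v)}) := by
  have : Nonempty V := h2sc.1.nonempty
  obtain ⟨hfar, hcommon⟩ := twoSC_iff.1 h2sc
  refine twoSC_iff.2 ⟨fun a => ?_, fun a b hab hnadj =>
    commonNeighbors_deleteEdges_nonempty hucrit hvcrit huw hvw hcommon hab hnadj⟩
  obtain ⟨b, hab, hnadj⟩ := hfar a
  exact ⟨b, hab, fun h => hnadj (G.deleteEdges_le _ h)⟩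

/-- If G is 2-self-centered with a triangle u, v, w where deg(u), deg(v) ≥ 3 and neither u
nor v is a critical vertex for any pair, then G - uv is also 2-self-centered. -/
theorem stmt_15 [Fintype V] (G : SimpleGraph V) [DecidableRel G.Adj]
    (h2sc : TwoSC G) (u v w : V)
    (huv : G.Adj u v) (hvw : G.Adj v w) (huw : G.Adj u w)
    (hdu : 3 ≤ G.degree u) (hdv : 3 ≤ G.degree v)
    (hucrit : ∀ a b : V, a ≠ b → ¬ G.Adj a b → G.Adj a u → G.Adj u b →
      ∃ x : V, x ≠ u ∧ G.Adj a x ∧ G.Adj x b)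
    (hvcrit : ∀ a b : V, a ≠ b → ¬ G.Adj a b → G.Adj a v → G.Adj v b →
      ∃ x : V, x ≠ v ∧ G.Adj a x ∧ G.Adj x b) :
    TwoSC (G.deleteEdges {s(u, v)}) :=
  stmt_15_general G h2sc u v w hvw huw hucrit hvcrit
end
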